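/- arXiv:2204.10038 — 5 statements merged into one kernel-verified Lean document; each statement's English description precedes it below -/
import Mathlib

section
/- Let q ∈ ℂ with q ∉ {0,1,2}. Then the following are equivalent: (i) there exists a series-parallel graph G with Z(G;q) = 0; (ii) there exists G ∈ 𝒢*_SP with Z^dif(G;q) ≠ 0 and Z^same(G;q) = −Z^dif(G;q) (i.e., the ratio R(G;q) = Z^same(G;q)/Z^dif(G;q) equals −1); (iii) there exists G ∈ 𝒢*_SP such that (Z^same(G;q), Z^dif(G;q)) ≠ (0,0) and Z^same(G;q)·Z^dif(G;q)·(Z^same(G;q) + Z^dif(G;q)) = 0 (i.e., the ratio R(G;q), viewed as a point of the Riemann sphere, lies in {0, −1, ∞}). -/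
open Polynomial

noncomputable section

/-- A finite (undirected) multigraph: a finite vertex type, a finite edge index type,
and a map assigning to each edge its pair of endpoints. -/
structure Multigraph where
  V : Type
  E : Type
  [finV : Finite V]
  [finE : Fintype E]
  ends : E → V × V

attribute [instance] Multigraph.finV Multigraph.finE

namespace Multigraph

/-- The spanning subgraph `(V, F)` determined by a set `F` of edges, as a simple graph
recording adjacency. -/
def spanning (G : Multigraph) (F : Finset G.E) : SimpleGraph G.V where
  Adj u v := u ≠ v ∧ ∃ e ∈ F, G.ends e = (u, v) ∨ G.ends e = (v, u)
  symm := ⟨by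
    rintro u v ⟨huv, e, he, h⟩
    exact ⟨huv.symm, e, he, h.symm⟩⟩
  loopless := ⟨by rintro v ⟨hv, -⟩; exact hv rfl⟩

/-- `k(F)`: the number of connected components of the spanning subgraph `(V, F)`. -/
def k (G : Multigraph) (F : Finset G.E) : ℕ :=
  Nat.card (G.spanning F).ConnectedComponent

/-- The chromatic polynomial `Z(G;q) = ∑_{F ⊆ E} (-1)^{|F|} q^{k(F)}`. -/
def Z (G : Multigraph) : Polynomial ℂ :=
  ∑ F : Finset G.E, (-1 : Polynomial ℂ) ^ F.card * X ^ G.k F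

/-- A multigraph is loopless if no edge has equal endpoints. -/
def Loopless (G : Multigraph) : Prop := ∀ e : G.E, (G.ends e).1 ≠ (G.ends e).2

/-- The degree of a vertex: the number of edge-ends incident to it. -/
def degree (G : Multigraph) (x : G.V) : ℕ :=
  Nat.card {e : G.E // (G.ends e).1 = x} + Nat.card {e : G.E // (G.ends e).2 = x}

end Multigraph

/-- A two-terminal graph: a finite multigraph together with two distinct
distinguished vertices, the start vertex `s` and the end vertex `t`. -/
structure TTGraph extends Multigraph where
  s : V
  t : V
  hst : s ≠ t

namespace TTGraph

/-- The chromatic polynomial of (the underlying multigraph of) a two-terminal graph. -/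
def Z (G : TTGraph) : Polynomial ℂ := G.toMultigraph.Z

def Loopless (G : TTGraph) : Prop := G.toMultigraph.Loopless

/-- A single edge `K₂`, with its two endpoints as terminals. -/
def K2 : TTGraph where
  V := Bool
  E := Unit
  ends := fun _ => (false, true)
  s := false
  t := true
  hst := Bool.false_ne_true

/-- The identification map used in the parallel composition: `s₂ ↦ s₁`, `t₂ ↦ t₁`. -/
def parMap (G₁ G₂ : TTGraph) (x : G₂.V) :
    G₁.V ⊕ {y : G₂.V // y ≠ G₂.s ∧ y ≠ G₂.t} := by
  classical
  exact if h1 : x = G₂.s then Sum.inl G₁.s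
    else if h2 : x = G₂.t then Sum.inl G₁.t
    else Sum.inr ⟨x, h1, h2⟩

/-- Parallel composition of two-terminal graphs: the disjoint union with `s₁` and `s₂`
identified (the new start) and `t₁` and `t₂` identified (the new end). -/
def par (G₁ G₂ : TTGraph) : TTGraph where
  V := G₁.V ⊕ {y : G₂.V // y ≠ G₂.s ∧ y ≠ G₂.t}
  E := G₁.E ⊕ G₂.E
  ends := Sum.elim
    (fun e => (Sum.inl (G₁.ends e).1, Sum.inl (G₁.ends e).2))
    (fun e => (parMap G₁ G₂ (G₂.ends e).1, parMap G₁ G₂ (G₂.ends e).2))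
  s := Sum.inl G₁.s
  t := Sum.inl G₁.t
  hst := fun h => G₁.hst (Sum.inl.inj h)

/-- The identification map used in the series composition: `s₂ ↦ t₁`. -/
def serMap (G₁ G₂ : TTGraph) (x : G₂.V) :
    G₁.V ⊕ {y : G₂.V // y ≠ G₂.s} := by
  classical
  exact if h : x = G₂.s then Sum.inl G₁.t else Sum.inr ⟨x, h⟩

/-- Series composition of two-terminal graphs: the disjoint union with `t₁` and `s₂`
identified; the new start is `s₁` and the new end is `t₂`. -/
def ser (G₁ G₂ : TTGraph) : TTGraph where
  V := G₁.V ⊕ {y : G₂.V // y ≠ G₂.s}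
  E := G₁.E ⊕ G₂.E
  ends := Sum.elim
    (fun e => (Sum.inl (G₁.ends e).1, Sum.inl (G₁.ends e).2))
    (fun e => (serMap G₁ G₂ (G₂.ends e).1, serMap G₁ G₂ (G₂.ends e).2))
  s := Sum.inl G₁.s
  t := Sum.inr ⟨G₂.t, G₂.hst.symm⟩
  hst := Sum.inl_ne_inr

/-- `Z^dif(G;q) := Z(G ∥ K₂; q)`. -/
def Zdif (G : TTGraph) : Polynomial ℂ := (G.par K2).Z

/-- `Z^same(G;q) := Z(G;q) - Z^dif(G;q)`. -/
def Zsame (G : TTGraph) : Polynomial ℂ := G.Z - G.Zdif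

/-- Series-parallel two-terminal graphs: those obtained from a single edge `K₂` by
repeated series and parallel compositions. -/
inductive IsSP : TTGraph → Prop
  | K2 : IsSP K2
  | ser {G₁ G₂ : TTGraph} : IsSP G₁ → IsSP G₂ → IsSP (G₁.ser G₂)
  | par {G₁ G₂ : TTGraph} : IsSP G₁ → IsSP G₂ → IsSP (G₁.par G₂)

/-- No edge of `G` joins the two terminals (membership in `𝒢*_SP` for series-parallel `G`). -/
def NoSTEdge (G : TTGraph) : Prop :=
  ∀ e : G.E, G.ends e ≠ (G.s, G.t) ∧ G.ends e ≠ (G.t, G.s)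

end TTGraph

/-! Evaluated at `q = n`, the chromatic polynomial counts proper `n`-colourings. Since the
permutations of the colours act on them, the colourings of a two-terminal graph with prescribed
colours at `s` and `t` come in only two sizes, according as the two colours agree or not; these
two numbers multiply under `∥` and compose like a `2 × 2` transfer matrix under `⋈`. This gives
polynomial identities expressing `Z^same` and `Z^dif` of `A ∥ B` and `A ⋈ B` through those of
`A` and `B`, valid at every `q`.

The theorem then follows by induction along the series-parallel decomposition: if `R(G;q)` lies in
`{0, -1, ∞}`, then either one of the two parts of `G` already has this property, or `G` (or
`A ∥ B` when `G = A ⋈ B`) has `Z = 0` and `Z^dif ≠ 0`, or `G = A ⋈ B` with `Z^dif(G;q) = 0` and,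
say, `Z^same(A;q) ≠ 0`. In the last case the witness is `A ∥ (B ⋈ K₂)`: it has the same underlying
graph as `(A ⋈ B) ∥ K₂`, so its `Z` is `Z^dif(A ⋈ B;q) = 0`, while its `Z^dif` is a nonzero
multiple of `Z^same(A;q) Z^dif(B;q)`. A graph with `Z^same = -Z^dif ≠ 0` has no edge joining `s`
and `t`, because such an edge forces `Z^same = 0`. -/

open Finset

theorem Equiv.Perm.exists_apply_eq_apply_eq {α : Type*} [DecidableEq α] {x₀ y₀ x y : α}
    (h₀ : x₀ ≠ y₀) (h : x ≠ y) : ∃ σ : Equiv.Perm α, σ x₀ = x ∧ σ y₀ = y := by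
  refine ⟨(Equiv.swap x₀ x).trans (Equiv.swap (Equiv.swap x₀ x y₀) y), ?_, by simp⟩
  have hy₀ : Equiv.swap x₀ x y₀ ≠ x := Equiv.swap_apply_eq_iff.not.2 (by simpa using h₀.symm)
  simp [Equiv.swap_apply_of_ne_of_ne hy₀.symm h]

theorem Fin.sum_sum_ite_eq {R : Type*} [CommRing R] (m : ℕ) (a b : R) :
    ∑ x : Fin m, ∑ y : Fin m, (if x = y then a else b) = m * a + m * (m - 1) * b := by
  have h (x y : Fin m) : (if x = y then a else b) = b + if x = y then a - b else 0 := by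
    split_ifs <;> ring
  simp only [h, sum_add_distrib, sum_const, sum_ite_eq, mem_univ, if_true, nsmul_eq_mul]
  ring

theorem Polynomial.eq_of_eval_natCast_add_two_eq {R : Type*} [CommRing R] [IsDomain R]
    [CharZero R] {p r : R[X]} (h : ∀ n : ℕ, p.eval ((n : R) + 2) = r.eval ((n : R) + 2)) :
    p = r := by
  refine eq_of_infinite_eval_eq p r (Set.Infinite.mono ?_ (Set.infinite_range_of_injective
    (f := fun n : ℕ => (n : R) + 2) fun m n hmn => by simpa using hmn))
  rintro _ ⟨n, rfl⟩
  exact h n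

namespace Multigraph

abbrev ProperColoring (G : Multigraph) (n : ℕ) : Type :=
  {c : G.V → Fin n // ∀ e, c (G.ends e).1 ≠ c (G.ends e).2}

theorem card_monochromatic (G : Multigraph) (n : ℕ) (F : Finset G.E) :
    Nat.card {c : G.V → Fin n // ∀ e ∈ F, c (G.ends e).1 = c (G.ends e).2} = n ^ G.k F := by
  have hwalk {c : G.V → Fin n} (hc : ∀ e ∈ F, c (G.ends e).1 = c (G.ends e).2) {u v : G.V}
      (p : (G.spanning F).Walk u v) : c u = c v := by
    induction p with
    | nil => rfl
    | cons huv _ ih =>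
      obtain ⟨-, e, he, h | h⟩ := huv
      · have hce := hc e he
        rw [h] at hce
        exact hce.trans ih
      · have hce := hc e he
        rw [h] at hce
        exact hce.symm.trans ih
  let toComponents :
      {c : G.V → Fin n // ∀ e ∈ F, c (G.ends e).1 = c (G.ends e).2} ≃
        ((G.spanning F).ConnectedComponent → Fin n) :=
    { toFun := fun c => SimpleGraph.ConnectedComponent.lift c.1 fun _ _ p _ => hwalk c.2 p
      invFun := fun f => ⟨fun v => f ((G.spanning F).connectedComponentMk v), fun e he => by
        by_cases hloop : (G.ends e).1 = (G.ends e).2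
        · rw [hloop]
        · exact congrArg f (SimpleGraph.ConnectedComponent.connectedComponentMk_eq_of_adj
            ⟨hloop, e, he, Or.inl rfl⟩)⟩
      left_inv := fun _ => rfl
      right_inv := fun f => funext fun x => x.ind fun _ => rfl }
  rw [Nat.card_congr toComponents, Nat.card_fun, Nat.card_eq_fintype_card, Fintype.card_fin, k]

theorem eval_natCast_Z (G : Multigraph) (n : ℕ) :
    G.Z.eval (n : ℂ) = Nat.card (G.ProperColoring n) := by
  have := Fintype.ofFinite G.V
  have := Classical.decEq G.V
  have hF (F : Finset G.E) : (n : ℂ) ^ G.k F =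
      ∑ c : G.V → Fin n, ∏ e ∈ F, if c (G.ends e).1 = c (G.ends e).2 then (1 : ℂ) else 0 := by
    simp_rw [prod_boole]
    rw [Finset.sum_boole, ← Nat.cast_pow, ← card_monochromatic G n F,
      Nat.card_eq_fintype_card, Fintype.card_subtype]
  have hproper (c : G.V → Fin n) :
      ∏ e, (1 - if c (G.ends e).1 = c (G.ends e).2 then (1 : ℂ) else 0) =
        ∑ F : Finset G.E, (-1) ^ F.card *
          ∏ e ∈ F, if c (G.ends e).1 = c (G.ends e).2 then (1 : ℂ) else 0 := by
    rw [← powerset_univ]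
    simp_rw [sub_eq_add_neg, add_comm (1 : ℂ)]
    classical
    rw [prod_add]
    simp only [prod_const_one, mul_one, prod_neg]
  calc G.Z.eval (n : ℂ) = ∑ F : Finset G.E, (-1) ^ F.card * (n : ℂ) ^ G.k F := by
        simp [Z, eval_finsetSum]
    _ = ∑ c : G.V → Fin n, ∏ e, (1 - if c (G.ends e).1 = c (G.ends e).2 then (1 : ℂ) else 0) := by
        simp_rw [hproper, hF, mul_sum]
        exact sum_comm
    _ = Nat.card (G.ProperColoring n) := by
        have hnot (p : Prop) {_ : Decidable p} :
            (1 : ℂ) - (if p then 1 else 0) = if ¬p then 1 else 0 := by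
          split_ifs <;> simp
        simp_rw [hnot, prod_boole]
        rw [Finset.sum_boole, Nat.card_eq_fintype_card, Fintype.card_subtype]
        simp

end Multigraph

namespace TTGraph

def numColorings (G : TTGraph) (n : ℕ) (x y : Fin n) : ℕ :=
  Nat.card {c : G.ProperColoring n // c.1 G.s = x ∧ c.1 G.t = y}

theorem eval_natCast_Z_eq_sum (G : TTGraph) (n : ℕ) :
    G.Z.eval (n : ℂ) = ∑ x, ∑ y, (G.numColorings n x y : ℂ) := by
  let terminalColors (c : G.ProperColoring n) : Fin n × Fin n := (c.1 G.s, c.1 G.t)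
  rw [Z, Multigraph.eval_natCast_Z, ← Nat.card_congr (Equiv.sigmaFiberEquiv terminalColors),
    Nat.card_sigma, Fintype.sum_prod_type]
  push_cast
  refine sum_congr rfl fun x _ => sum_congr rfl fun y _ => ?_
  exact congrArg _ (Nat.card_congr (Equiv.subtypeEquivRight fun _ => Prod.ext_iff))

theorem numColorings_perm (G : TTGraph) (n : ℕ) (σ : Equiv.Perm (Fin n)) (x y : Fin n) :
    G.numColorings n (σ x) (σ y) = G.numColorings n x y := by
  refine Nat.card_congr (Equiv.subtypeEquiv (Equiv.subtypeEquiv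
    ((Equiv.refl G.V).arrowCongr σ.symm) fun c => ?_) fun c => ?_)
  · simp
  · simp [Equiv.symm_apply_eq]

theorem numColorings_eq_ite (G : TTGraph) {n : ℕ} {x₀ y₀ : Fin n} (h₀ : x₀ ≠ y₀) (x y : Fin n) :
    G.numColorings n x y =
      if x = y then G.numColorings n x₀ x₀ else G.numColorings n x₀ y₀ := by
  split_ifs with h
  · subst h
    simpa using G.numColorings_perm n (Equiv.swap x₀ x) x₀ x₀
  · obtain ⟨σ, hx, hy⟩ := Equiv.Perm.exists_apply_eq_apply_eq h₀ h
    rw [← hx, ← hy, G.numColorings_perm]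

section Gluing

variable {α : Type*} (A B : TTGraph)

theorem parMap_s : parMap A B B.s = Sum.inl A.s := by
  simp [parMap]

theorem parMap_t : parMap A B B.t = Sum.inl A.t := by
  simp [parMap, B.hst.symm]

theorem parMap_of_ne {v : B.V} (hs : v ≠ B.s) (ht : v ≠ B.t) :
    parMap A B v = Sum.inr ⟨v, hs, ht⟩ := by
  simp [parMap, hs, ht]

theorem serMap_s : serMap A B B.s = Sum.inl A.t := by
  simp [serMap]

theorem serMap_of_ne {v : B.V} (hs : v ≠ B.s) : serMap A B v = Sum.inr ⟨v, hs⟩ := by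
  simp [serMap, hs]

variable {A B}

theorem elim_parMap {f : A.V → α} {g : B.V → α} (hs : f A.s = g B.s) (ht : f A.t = g B.t)
    (v : B.V) : Sum.elim f (fun w => g w.1) (parMap A B v) = g v := by
  by_cases hvs : v = B.s
  · rw [hvs, parMap_s, Sum.elim_inl, hs]
  by_cases hvt : v = B.t
  · rw [hvt, parMap_t, Sum.elim_inl, ht]
  rw [parMap_of_ne A B hvs hvt, Sum.elim_inr]

theorem elim_serMap {f : A.V → α} {g : B.V → α} (h : f A.t = g B.s) (v : B.V) :
    Sum.elim f (fun w => g w.1) (serMap A B v) = g v := by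
  by_cases hvs : v = B.s
  · rw [hvs, serMap_s, Sum.elim_inl, h]
  rw [serMap_of_ne A B hvs, Sum.elim_inr]

theorem NoSTEdge.of_par (h : (A.par B).NoSTEdge) : A.NoSTEdge ∧ B.NoSTEdge := by
  refine ⟨fun e => ⟨fun he => ?_, fun he => ?_⟩, fun e => ⟨fun he => ?_, fun he => ?_⟩⟩
  · exact (h (Sum.inl e)).1 (by simp [par, he])
  · exact (h (Sum.inl e)).2 (by simp [par, he])
  · exact (h (Sum.inr e)).1 (by simp [par, he, parMap_s, parMap_t])
  · exact (h (Sum.inr e)).2 (by simp [par, he, parMap_s, parMap_t])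

end Gluing

theorem numColorings_par (A B : TTGraph) (n : ℕ) (x y : Fin n) :
    (A.par B).numColorings n x y = A.numColorings n x y * B.numColorings n x y := by
  rw [numColorings, numColorings, numColorings, ← Nat.card_prod]
  refine Nat.card_congr
    { toFun := fun c => (⟨⟨fun v => c.1.1 (Sum.inl v), fun e => c.1.2 (Sum.inl e)⟩, c.2⟩,
        ⟨⟨fun v => c.1.1 (parMap A B v), fun e => c.1.2 (Sum.inr e)⟩,
          (congrArg c.1.1 (parMap_s A B)).trans c.2.1, (congrArg c.1.1 (parMap_t A B)).trans c.2.2⟩)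
      invFun := fun c => ⟨⟨Sum.elim c.1.1.1 fun w => c.2.1.1 w.1, ?_⟩, c.1.2⟩
      left_inv := fun c => ?_
      right_inv := fun c => ?_ }
  · have hglue := elim_parMap (c.1.2.1.trans c.2.2.1.symm) (c.1.2.2.trans c.2.2.2.symm)
    rintro (e | e)
    · exact c.1.1.2 e
    · simpa [par, hglue] using c.2.1.2 e
  · refine Subtype.ext (Subtype.ext (funext ?_))
    rintro (v | ⟨v, hs, ht⟩)
    · rfl
    · exact congrArg c.1.1 (parMap_of_ne A B hs ht)
  · have hglue := elim_parMap (c.1.2.1.trans c.2.2.1.symm) (c.1.2.2.trans c.2.2.2.symm)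
    exact Prod.ext rfl (Subtype.ext (Subtype.ext (funext hglue)))

theorem numColorings_ser (A B : TTGraph) (n : ℕ) (x y : Fin n) :
    (A.ser B).numColorings n x y = ∑ z, A.numColorings n x z * B.numColorings n z y := by
  let middleColor
      (c : {c : (A.ser B).ProperColoring n // c.1 (A.ser B).s = x ∧ c.1 (A.ser B).t = y}) :
      Fin n :=
    c.1.1 (Sum.inl A.t)
  rw [numColorings, ← Nat.card_congr (Equiv.sigmaFiberEquiv middleColor), Nat.card_sigma]
  refine sum_congr rfl fun z _ => ?_
  rw [numColorings, numColorings, ← Nat.card_prod]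
  refine Nat.card_congr
    { toFun := fun c =>
        (⟨⟨fun v => c.1.1.1 (Sum.inl v), fun e => c.1.1.2 (Sum.inl e)⟩, c.1.2.1, c.2⟩,
        ⟨⟨fun v => c.1.1.1 (serMap A B v), fun e => c.1.1.2 (Sum.inr e)⟩,
          (congrArg c.1.1.1 (serMap_s A B)).trans c.2,
          (congrArg c.1.1.1 (serMap_of_ne A B B.hst.symm)).trans c.1.2.2⟩)
      invFun := fun c => ⟨⟨⟨Sum.elim c.1.1.1 fun w => c.2.1.1 w.1, ?_⟩, c.1.2.1, c.2.2.2⟩, c.1.2.2⟩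
      left_inv := fun c => ?_
      right_inv := fun c => ?_ }
  · have hglue := elim_serMap (c.1.2.2.trans c.2.2.1.symm)
    rintro (e | e)
    · exact c.1.1.2 e
    · simpa [ser, hglue] using c.2.1.2 e
  · refine Subtype.ext (Subtype.ext (Subtype.ext (funext ?_)))
    rintro (v | ⟨v, hs⟩)
    · rfl
    · exact congrArg c.1.1.1 (serMap_of_ne A B hs)
  · have hglue := elim_serMap (c.1.2.2.trans c.2.2.1.symm)
    exact Prod.ext rfl (Subtype.ext (Subtype.ext (funext hglue)))

theorem numColorings_K2 (n : ℕ) (x y : Fin n) :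
    K2.numColorings n x y = if x = y then 0 else 1 := by
  split_ifs with h
  · have : IsEmpty {c : K2.ProperColoring n // c.1 K2.s = x ∧ c.1 K2.t = y} :=
      ⟨fun c => c.1.2 () (c.2.1.trans (h.trans c.2.2.symm))⟩
    exact Nat.card_of_isEmpty
  · let c₀ : {c : K2.ProperColoring n // c.1 K2.s = x ∧ c.1 K2.t = y} :=
      ⟨⟨fun b => bif b then y else x, fun _ => h⟩, rfl, rfl⟩
    refine Nat.card_eq_one_iff_exists.2 ⟨c₀, ?_⟩
    rintro ⟨⟨c, -⟩, hs, ht⟩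
    refine Subtype.ext (Subtype.ext (funext fun b => ?_))
    cases b
    exacts [hs, ht]

section Counting

variable (G : TTGraph) (n : ℕ)

theorem eval_add_two_Z : G.Z.eval ((n : ℂ) + 2) =
    (n + 2) * G.numColorings (n + 2) 0 0 + (n + 2) * (n + 1) * G.numColorings (n + 2) 0 1 := by
  have hcount (x y : Fin (n + 2)) : (G.numColorings (n + 2) x y : ℂ) =
      if x = y then (G.numColorings (n + 2) 0 0 : ℂ) else G.numColorings (n + 2) 0 1 := by
    rw [G.numColorings_eq_ite zero_ne_one]
    split_ifs <;> rfl
  have := G.eval_natCast_Z_eq_sum (n + 2)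
  push_cast at this
  rw [this, sum_congr rfl fun x _ => sum_congr rfl fun y _ => hcount x y, Fin.sum_sum_ite_eq]
  push_cast
  ring

theorem eval_add_two_Zdif :
    G.Zdif.eval ((n : ℂ) + 2) = (n + 2) * (n + 1) * G.numColorings (n + 2) 0 1 := by
  have hcount (x y : Fin (n + 2)) :
      ((G.par K2).numColorings (n + 2) x y : ℂ) =
        if x = y then 0 else (G.numColorings (n + 2) 0 1 : ℂ) := by
    rw [numColorings_par, numColorings_K2, G.numColorings_eq_ite zero_ne_one]
    split_ifs <;> simp
  have := (G.par K2).eval_natCast_Z_eq_sum (n + 2)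
  push_cast at this
  rw [Zdif, this]
  simp only [hcount, Fin.sum_sum_ite_eq]
  push_cast
  ring

theorem eval_add_two_Zsame :
    G.Zsame.eval ((n : ℂ) + 2) = (n + 2) * G.numColorings (n + 2) 0 0 := by
  rw [Zsame, eval_sub, eval_add_two_Z, eval_add_two_Zdif]
  ring

variable (A B : TTGraph)

theorem numColorings_ser_zero_zero : (A.ser B).numColorings (n + 2) 0 0 =
    A.numColorings (n + 2) 0 0 * B.numColorings (n + 2) 0 0 +
      (n + 1) * (A.numColorings (n + 2) 0 1 * B.numColorings (n + 2) 0 1) := by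
  have hoff (i : Fin (n + 1)) : A.numColorings (n + 2) 0 i.succ * B.numColorings (n + 2) i.succ 0 =
      A.numColorings (n + 2) 0 1 * B.numColorings (n + 2) 0 1 := by
    rw [A.numColorings_eq_ite zero_ne_one, B.numColorings_eq_ite zero_ne_one,
      if_neg (Fin.succ_ne_zero i).symm, if_neg (Fin.succ_ne_zero i)]
  rw [numColorings_ser, Fin.sum_univ_succ, sum_congr rfl fun i _ => hoff i]
  simp

theorem numColorings_ser_zero_one : (A.ser B).numColorings (n + 2) 0 1 =
    A.numColorings (n + 2) 0 0 * B.numColorings (n + 2) 0 1 +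
      A.numColorings (n + 2) 0 1 * B.numColorings (n + 2) 0 0 +
        n * (A.numColorings (n + 2) 0 1 * B.numColorings (n + 2) 0 1) := by
  have hdiag : B.numColorings (n + 2) 1 1 = B.numColorings (n + 2) 0 0 := by
    rw [B.numColorings_eq_ite zero_ne_one, if_pos rfl]
  have hoff (i : Fin n) :
      A.numColorings (n + 2) 0 i.succ.succ * B.numColorings (n + 2) i.succ.succ 1 =
        A.numColorings (n + 2) 0 1 * B.numColorings (n + 2) 0 1 := by
    rw [A.numColorings_eq_ite zero_ne_one, B.numColorings_eq_ite zero_ne_one,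
      if_neg (Fin.succ_ne_zero _).symm, if_neg (by simp [Fin.ext_iff])]
  rw [numColorings_ser, Fin.sum_univ_succ, Fin.sum_univ_succ, sum_congr rfl fun i _ => hoff i]
  simp only [Fin.succ_zero_eq_one, hdiag, sum_const, card_univ, Fintype.card_fin, smul_eq_mul]
  ring

end Counting

section Identities

variable (G A B : TTGraph) (q : ℂ)

theorem eval_Zsame_K2 : K2.Zsame.eval q = 0 := by
  have h : K2.Zsame = 0 := eq_of_eval_natCast_add_two_eq fun n => by
    simp [eval_add_two_Zsame, numColorings_K2]
  simp [h]

theorem eval_Zdif_K2 : K2.Zdif.eval q = q * (q - 1) := by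
  have h : K2.Zdif = X * (X - 1) := eq_of_eval_natCast_add_two_eq fun n => by
    simp only [eval_add_two_Zdif, numColorings_K2, zero_ne_one, if_false, eval_mul, eval_X,
      eval_sub, eval_one]
    push_cast
    ring
  simp [h]

theorem eval_Zsame_par : q * (A.par B).Zsame.eval q = A.Zsame.eval q * B.Zsame.eval q := by
  have h : X * (A.par B).Zsame = A.Zsame * B.Zsame := eq_of_eval_natCast_add_two_eq fun n => by
    simp only [eval_mul, eval_X, eval_add_two_Zsame, numColorings_par]
    push_cast
    ring
  simpa using congrArg (eval q) h

theorem eval_Zdif_par :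
    q * (q - 1) * (A.par B).Zdif.eval q = A.Zdif.eval q * B.Zdif.eval q := by
  have h : X * (X - 1) * (A.par B).Zdif = A.Zdif * B.Zdif :=
    eq_of_eval_natCast_add_two_eq fun n => by
      simp only [eval_mul, eval_sub, eval_X, eval_one, eval_add_two_Zdif, numColorings_par]
      push_cast
      ring
  simpa using congrArg (eval q) h

theorem eval_Z_ser : q * (A.ser B).Z.eval q = A.Z.eval q * B.Z.eval q := by
  have h : X * (A.ser B).Z = A.Z * B.Z := eq_of_eval_natCast_add_two_eq fun n => by
    simp only [eval_mul, eval_X, eval_add_two_Z, numColorings_ser_zero_zero,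
      numColorings_ser_zero_one]
    push_cast
    ring
  simpa using congrArg (eval q) h

theorem Zsame_ser_eq_Z_par : (A.ser B).Zsame = (A.par B).Z :=
  eq_of_eval_natCast_add_two_eq fun n => by
    rw [eval_add_two_Zsame, eval_add_two_Z, numColorings_ser_zero_zero, numColorings_par,
      numColorings_par]
    push_cast
    ring

theorem eval_Zdif_ser : q * (q - 1) * (A.ser B).Zdif.eval q =
    (q - 1) * (A.Zsame.eval q * B.Zdif.eval q + A.Zdif.eval q * B.Zsame.eval q) +
      (q - 2) * (A.Zdif.eval q * B.Zdif.eval q) := by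
  have h : X * (X - 1) * (A.ser B).Zdif =
      (X - 1) * (A.Zsame * B.Zdif + A.Zdif * B.Zsame) + (X - 2) * (A.Zdif * B.Zdif) :=
    eq_of_eval_natCast_add_two_eq fun n => by
      simp only [eval_mul, eval_add, eval_sub, eval_X, eval_one, eval_ofNat, eval_add_two_Zsame,
        eval_add_two_Zdif, numColorings_ser_zero_one]
      push_cast
      ring
  simpa using congrArg (eval q) h

theorem eval_Z : G.Z.eval q = G.Zsame.eval q + G.Zdif.eval q := by
  rw [Zsame, eval_sub, sub_add_cancel]

theorem noSTEdge_of_eval_Zsame_ne_zero (h : G.Zsame.eval q ≠ 0) : G.NoSTEdge := by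
  intro e
  by_contra hedge
  have hsame : G.Zsame = 0 := eq_of_eval_natCast_add_two_eq fun n => by
    have : IsEmpty {c : G.ProperColoring (n + 2) // c.1 G.s = 0 ∧ c.1 G.t = 0} := ⟨fun c => by
      refine c.1.2 e ?_
      rcases not_and_or.1 hedge with h | h <;> simp [not_ne_iff.1 h, c.2.1, c.2.2]⟩
    have hempty : G.numColorings (n + 2) 0 0 = 0 := Nat.card_of_isEmpty
    simp [eval_add_two_Zsame, hempty]
  simp [hsame] at h

end Identities

end TTGraph

def ExistsSPRatioNegOne (q : ℂ) : Prop :=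
  ∃ G : TTGraph, G.IsSP ∧ G.NoSTEdge ∧ G.Zdif.eval q ≠ 0 ∧ G.Zsame.eval q = -G.Zdif.eval q

namespace TTGraph

/-- `R(G;q) ∈ {∞, 0, -1}`, except that `R = 0` counts only when no edge joins `s` and `t`; the
case `Z^same(G;q) = Z^dif(G;q) = 0` is included. -/
def RatioExceptional (G : TTGraph) (q : ℂ) : Prop :=
  G.Zdif.eval q = 0 ∨ (G.Zsame.eval q = 0 ∧ G.NoSTEdge) ∨ G.Z.eval q = 0

variable {G A B : TTGraph} {q : ℂ}

theorem existsSPRatioNegOne_of_eval_Z (hG : G.IsSP) (hZ : G.Z.eval q = 0)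
    (hd : G.Zdif.eval q ≠ 0) : ExistsSPRatioNegOne q := by
  have hs : G.Zsame.eval q = -G.Zdif.eval q := by
    rw [eval_Z] at hZ
    linear_combination hZ
  exact ⟨G, hG, noSTEdge_of_eval_Zsame_ne_zero G q (hs ▸ neg_ne_zero.2 hd), hd, hs⟩

theorem not_ratioExceptional_K2 (h0 : q ≠ 0) (h1 : q ≠ 1) : ¬K2.RatioExceptional q := by
  have hq : q * (q - 1) ≠ 0 := mul_ne_zero h0 (sub_ne_zero.2 h1)
  rintro (hd | ⟨-, hno⟩ | hZ)
  · exact hq (by rw [← eval_Zdif_K2 q, hd])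
  · exact (hno ()).1 rfl
  · exact hq (by rw [← hZ, eval_Z, eval_Zsame_K2, eval_Zdif_K2, zero_add])

theorem RatioExceptional.existsSPRatioNegOne_par (hA : A.IsSP) (hB : B.IsSP)
    (ihA : A.RatioExceptional q → ExistsSPRatioNegOne q)
    (ihB : B.RatioExceptional q → ExistsSPRatioNegOne q)
    (h : (A.par B).RatioExceptional q) : ExistsSPRatioNegOne q := by
  by_cases hd : (A.par B).Zdif.eval q = 0
  · have hdAB := eval_Zdif_par A B q
    rw [hd, mul_zero, eq_comm, mul_eq_zero] at hdAB
    exact hdAB.elim (fun hdA => ihA (Or.inl hdA)) fun hdB => ihB (Or.inl hdB)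
  rcases h with hd' | ⟨hs, hno⟩ | hZ
  · exact absurd hd' hd
  · have hsAB := eval_Zsame_par A B q
    rw [hs, mul_zero, eq_comm, mul_eq_zero] at hsAB
    exact hsAB.elim (fun hsA => ihA (Or.inr (Or.inl ⟨hsA, hno.of_par.1⟩)))
      fun hsB => ihB (Or.inr (Or.inl ⟨hsB, hno.of_par.2⟩))
  · exact existsSPRatioNegOne_of_eval_Z (hA.par hB) hZ hd

theorem existsSPRatioNegOne_of_ser_relation (h0 : q ≠ 0) (h1 : q ≠ 1)
    (hA : A.IsSP) (hB : B.IsSP) (hdB : B.Zdif.eval q ≠ 0) (hsA : A.Zsame.eval q ≠ 0)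
    (hrel : (q - 1) * (A.Zsame.eval q * B.Zdif.eval q + A.Zdif.eval q * B.Zsame.eval q) +
      (q - 2) * (A.Zdif.eval q * B.Zdif.eval q) = 0) :
    ExistsSPRatioNegOne q := by
  have hq1 : q - 1 ≠ 0 := sub_ne_zero.2 h1
  have hq : q * (q - 1) ≠ 0 := mul_ne_zero h0 hq1
  set C := B.ser K2
  have hsC : C.Zsame = B.Zdif := Zsame_ser_eq_Z_par B K2
  have hdC : C.Zdif.eval q = (q - 1) * B.Zsame.eval q + (q - 2) * B.Zdif.eval q := by
    have h := eval_Zdif_ser B K2 q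
    rw [eval_Zsame_K2, eval_Zdif_K2] at h
    exact mul_left_cancel₀ hq (by linear_combination h)
  have hsW := eval_Zsame_par A C q
  have hdW := eval_Zdif_par A C q
  rw [hsC] at hsW
  have hZW : (A.par C).Z.eval q = 0 := by
    refine (mul_eq_zero.1 (?_ : q * (q - 1) * (A.par C).Z.eval q = 0)).resolve_left hq
    rw [eval_Z]
    linear_combination (q - 1) * hsW + hdW + A.Zdif.eval q * hdC + hrel
  refine existsSPRatioNegOne_of_eval_Z (hA.par (hB.ser .K2)) hZW fun hdW0 => ?_
  have h : (q - 1) * (A.Zsame.eval q * B.Zdif.eval q) = 0 := by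
    linear_combination hdW + A.Zdif.eval q * hdC + hrel - q * (q - 1) * hdW0
  exact mul_ne_zero hq1 (mul_ne_zero hsA hdB) h

theorem RatioExceptional.existsSPRatioNegOne_ser (h0 : q ≠ 0) (h1 : q ≠ 1) (h2 : q ≠ 2)
    (hA : A.IsSP) (hB : B.IsSP)
    (ihA : A.RatioExceptional q → ExistsSPRatioNegOne q)
    (ihB : B.RatioExceptional q → ExistsSPRatioNegOne q)
    (h : (A.ser B).RatioExceptional q) : ExistsSPRatioNegOne q := by
  by_cases hZ : (A.ser B).Z.eval q = 0
  · have hZAB := eval_Z_ser A B q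
    rw [hZ, mul_zero, eq_comm, mul_eq_zero] at hZAB
    exact hZAB.elim (fun hZA => ihA (Or.inr (Or.inr hZA))) fun hZB => ihB (Or.inr (Or.inr hZB))
  by_cases hs : (A.ser B).Zsame.eval q = 0
  · rw [Zsame_ser_eq_Z_par] at hs
    exact RatioExceptional.existsSPRatioNegOne_par hA hB ihA ihB (Or.inr (Or.inr hs))
  have hd : (A.ser B).Zdif.eval q = 0 := by
    rcases h with hd | ⟨hs', -⟩ | hZ'
    exacts [hd, absurd hs' hs, absurd hZ' hZ]
  by_cases hdA : A.Zdif.eval q = 0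
  · exact ihA (Or.inl hdA)
  by_cases hdB : B.Zdif.eval q = 0
  · exact ihB (Or.inl hdB)
  have hrel : (q - 1) * (A.Zsame.eval q * B.Zdif.eval q + A.Zdif.eval q * B.Zsame.eval q) +
      (q - 2) * (A.Zdif.eval q * B.Zdif.eval q) = 0 := by
    linear_combination q * (q - 1) * hd - eval_Zdif_ser A B q
  by_cases hsA : A.Zsame.eval q = 0
  · by_cases hsB : B.Zsame.eval q = 0
    · rw [hsA, hsB] at hrel
      exact absurd (by linear_combination hrel)
        (mul_ne_zero (sub_ne_zero.2 h2) (mul_ne_zero hdA hdB))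
    · exact existsSPRatioNegOne_of_ser_relation h0 h1 hB hA hdA hsB (by linear_combination hrel)
  · exact existsSPRatioNegOne_of_ser_relation h0 h1 hA hB hdB hsA hrel

theorem IsSP.existsSPRatioNegOne (h0 : q ≠ 0) (h1 : q ≠ 1) (h2 : q ≠ 2) (hG : G.IsSP)
    (h : G.RatioExceptional q) : ExistsSPRatioNegOne q := by
  induction hG with
  | K2 => exact absurd h (not_ratioExceptional_K2 h0 h1)
  | ser hA hB ihA ihB => exact h.existsSPRatioNegOne_ser h0 h1 h2 hA hB ihA ihB
  | par hA hB ihA ihB => exact h.existsSPRatioNegOne_par hA hB ihA ihB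

theorem ratioExceptional_of_mul_eq_zero (hno : G.NoSTEdge)
    (h : G.Zsame.eval q * G.Zdif.eval q * (G.Zsame.eval q + G.Zdif.eval q) = 0) :
    G.RatioExceptional q := by
  rcases mul_eq_zero.1 h with h | hZ
  · rcases mul_eq_zero.1 h with hs | hd
    exacts [Or.inr (Or.inl ⟨hs, hno⟩), Or.inl hd]
  · exact Or.inr (Or.inr (by rw [eval_Z]; exact hZ))

end TTGraph

/-- **Theorem.** For `q ∉ {0,1,2}` the following are equivalent:
(i) some series-parallel graph has `Z(G;q) = 0`;
(ii) some series-parallel graph with no edge joining its terminals has ratio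
`R(G;q) = Z^same(G;q)/Z^dif(G;q) = -1` (with `Z^dif(G;q) ≠ 0`);
(iii) some series-parallel graph with no edge joining its terminals has ratio
`R(G;q) ∈ {0, -1, ∞}` as a point of the Riemann sphere. -/
theorem zero_iff_ratio_neg_one_iff_ratio_exceptional
    (q : ℂ) (h0 : q ≠ 0) (h1 : q ≠ 1) (h2 : q ≠ 2) :
    ((∃ G : TTGraph, G.IsSP ∧ (TTGraph.Z G).eval q = 0) ↔
      (∃ G : TTGraph, G.IsSP ∧ G.NoSTEdge ∧
        (G.Zdif).eval q ≠ 0 ∧ (G.Zsame).eval q = -((G.Zdif).eval q))) ∧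
    ((∃ G : TTGraph, G.IsSP ∧ G.NoSTEdge ∧
        (G.Zdif).eval q ≠ 0 ∧ (G.Zsame).eval q = -((G.Zdif).eval q)) ↔
      (∃ G : TTGraph, G.IsSP ∧ G.NoSTEdge ∧
        ¬((G.Zsame).eval q = 0 ∧ (G.Zdif).eval q = 0) ∧
        (G.Zsame).eval q * (G.Zdif).eval q * ((G.Zsame).eval q + (G.Zdif).eval q) = 0)) := by
  refine ⟨⟨fun ⟨G, hG, hZ⟩ => hG.existsSPRatioNegOne h0 h1 h2 (Or.inr (Or.inr hZ)), ?_⟩, ?_, ?_⟩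
  · rintro ⟨G, hG, -, -, hs⟩
    exact ⟨G, hG, by rw [TTGraph.eval_Z, hs, neg_add_cancel]⟩
  · rintro ⟨G, hG, hno, hd, hs⟩
    exact ⟨G, hG, hno, fun h => hd h.2, by rw [hs, neg_add_cancel, mul_zero]⟩
  · rintro ⟨G, hG, hno, -, h⟩
    exact hG.existsSPRatioNegOne h0 h1 h2 (TTGraph.ratioExceptional_of_mul_eq_zero hno h)

end
end

section
/- Let q, r ∈ ℝ with q ≠ 0 and r ≠ 1, and let C ⊆ ℂ be the circle having the line segment from r to f_q(r) as a diameter (a single point if r = f_q(r)). Then 1 ∉ C and f_q maps C onto itself: f_q(C) = C. -/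
/-! Shifting by `1`, `f_q` becomes `w ↦ q / w`. For a circle with real centre `c` and radius `ρ`,
put `p = c² - ρ²`, the power of the origin with respect to it; then `w ↦ p / w` preserves the
circle, because `|p/w|² - 2c·Re(p/w) + p = (p / |w|²)(|w|² - 2c·Re w + p)`. For the circle on the
diameter `[u, q/u]` (with `u = r - 1`) the power is `u · (q/u) = q`. Since `f_q` is an involution,
mapping `C` into itself already gives `f_q(C) = C`. -/

noncomputable section

/-- The Möbius transformation `f_q(y) = 1 + q/(y-1)`. -/
def fq (q y : ℂ) : ℂ := 1 + q / (y - 1)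

open Complex Metric Set

theorem Function.Involutive.image_eq_of_mapsTo {α : Type*} {f : α → α} (hf : f.Involutive)
    {s : Set α} (hs : MapsTo f s s) : f '' s = s :=
  (InvOn.bijOn ⟨hf.leftInverse.leftInvOn s, hf.rightInverse.rightInvOn s⟩ hs hs).image_eq

lemma mem_sphere_ofReal_iff {w : ℂ} {c ρ : ℝ} :
    w ∈ sphere (c : ℂ) ρ ↔ 0 ≤ ρ ∧ normSq w - 2 * c * w.re + (c ^ 2 - ρ ^ 2) = 0 := by
  have hnorm : ‖w - c‖ ^ 2 = normSq w - 2 * c * w.re + c ^ 2 := by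
    rw [Complex.sq_norm, normSq_apply, normSq_apply]
    simp only [sub_re, sub_im, ofReal_re, ofReal_im]
    ring
  rw [mem_sphere_iff_norm]
  constructor
  · rintro rfl
    exact ⟨norm_nonneg _, by linear_combination -hnorm⟩
  · rintro ⟨hρ, h⟩
    exact (pow_left_inj₀ (norm_nonneg _) hρ two_ne_zero).1 (by linear_combination hnorm + h)

lemma div_mem_sphere_ofReal {c ρ p : ℝ} (hp : c ^ 2 - ρ ^ 2 = p) {w : ℂ}
    (hw : w ∈ sphere (c : ℂ) ρ) : (p : ℂ) / w ∈ sphere (c : ℂ) ρ := by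
  rw [mem_sphere_ofReal_iff, hp] at hw ⊢
  obtain ⟨hρ, hw⟩ := hw
  refine ⟨hρ, ?_⟩
  rcases eq_or_ne w 0 with rfl | hw0
  · simpa using hw
  have hn : normSq w ≠ 0 := normSq_eq_zero.not.2 hw0
  rw [normSq_div, normSq_ofReal, div_re, ofReal_re, ofReal_im]
  field_simp
  linear_combination p * hw

lemma zero_notMem_sphere_ofReal {c ρ p : ℝ} (hp : c ^ 2 - ρ ^ 2 = p) (hp0 : p ≠ 0) :
    (0 : ℂ) ∉ sphere (c : ℂ) ρ := by
  rw [mem_sphere_ofReal_iff, hp]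
  simpa using fun _ => hp0

lemma mem_sphere_one_add_iff {y : ℂ} {c ρ : ℝ} :
    y ∈ sphere (1 + c : ℂ) ρ ↔ y - 1 ∈ sphere (c : ℂ) ρ := by
  simp only [mem_sphere_iff_norm, sub_add_eq_sub_sub]

lemma fq_sub_one (q y : ℂ) : fq q y - 1 = q / (y - 1) := by
  simp [fq]

-- Also at `y = 1`: there `fq q 1 = 1`, since `q / 0 = 0`.
lemma fq_involutive {q : ℂ} (hq : q ≠ 0) : Function.Involutive (fq q) := fun y => by
  rw [fq, fq_sub_one, div_div_cancel₀ hq, add_sub_cancel]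

lemma one_notMem_sphere {q c ρ : ℝ} (hq : c ^ 2 - ρ ^ 2 = q) (hq0 : q ≠ 0) :
    (1 : ℂ) ∉ sphere (1 + c : ℂ) ρ := by
  simpa [mem_sphere_one_add_iff] using zero_notMem_sphere_ofReal hq hq0

lemma mapsTo_fq_sphere {q c ρ : ℝ} (hq : c ^ 2 - ρ ^ 2 = q) :
    MapsTo (fq q) (sphere (1 + c : ℂ) ρ) (sphere (1 + c : ℂ) ρ) := fun y hy => by
  rw [mem_sphere_one_add_iff, fq_sub_one] at *
  exact div_mem_sphere_ofReal hq hy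

lemma image_fq_sphere {q c ρ : ℝ} (hq : c ^ 2 - ρ ^ 2 = q) (hq0 : q ≠ 0) :
    fq q '' sphere (1 + c : ℂ) ρ = sphere (1 + c : ℂ) ρ :=
  (fq_involutive (ofReal_ne_zero.2 hq0)).image_eq_of_mapsTo (mapsTo_fq_sphere hq)

/-- **Theorem.** For real `q ≠ 0` and real `r ≠ 1`, the circle `C` having the segment
from `r` to `f_q(r)` as a diameter (a single point if `r = f_q(r)`) avoids `1` and is
mapped onto itself by `f_q`. -/
theorem circle_on_diameter_fq_invariant (q r : ℝ) (hq : q ≠ 0) (hr : r ≠ 1)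
    (C : Set ℂ)
    (hC : C = Metric.sphere (((r : ℂ) + fq (q : ℂ) (r : ℂ)) / 2)
      (‖(r : ℂ) - fq (q : ℂ) (r : ℂ)‖ / 2)) :
    (1 : ℂ) ∉ C ∧ fq (q : ℂ) '' C = C := by
  set u := r - 1 with hu
  have hu0 : u ≠ 0 := sub_ne_zero.2 hr
  have hfq : fq q r = ((1 + q / u : ℝ) : ℂ) := by simp [fq, hu]
  have hsphere : C = sphere (1 + ((u + q / u) / 2 : ℝ) : ℂ) (|u - q / u| / 2) := by
    rw [hC, hfq, ← ofReal_sub, norm_real, Real.norm_eq_abs]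
    congr 1
    · push_cast [hu]; ring
    · congr 2; ring
  have hpower : ((u + q / u) / 2) ^ 2 - (|u - q / u| / 2) ^ 2 = q := by
    rw [div_pow, div_pow, sq_abs]
    field_simp
    ring
  rw [hsphere]
  exact ⟨one_notMem_sphere hpower hq, image_fq_sphere hpower hq⟩

end
end

section
/- Let V ⊆ ℂ be a closed disk, i.e., V = {z ∈ ℂ : |z − c| ≤ ρ} for some c ∈ ℂ and ρ ≥ 0. Then the product set V·V = {v·w : v, w ∈ V} coincides with the set of squares {v² : v ∈ V}. -/
/-!
After a rotation the centre `c` is a nonnegative real. For `v, w` in the disk let `s` be the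
square root of `v * w` with `0 ≤ re s`. As `‖s‖² = ‖v‖ ‖w‖`, membership of `s` in the disk reads
`‖v‖ ‖w‖ + c² - ρ² ≤ 2 c re s`. The membership inequalities of `v` and `w` bound the left side
by two quantities whose product is at most `(2 c re s)²`, which is nonnegative.
-/

noncomputable section

/-- The product set `V·V = {v·w : v, w ∈ V}`. -/
def prodSet (V : Set ℂ) : Set ℂ := {z | ∃ v ∈ V, ∃ w ∈ V, z = v * w}

open Complex Metric

lemma sq_norm_sub_ofReal (u : ℂ) (c : ℝ) : ‖u - c‖ ^ 2 = ‖u‖ ^ 2 - 2 * c * u.re + c ^ 2 := by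
  simp only [Complex.sq_norm, normSq_apply, sub_re, sub_im, ofReal_re, ofReal_im, sub_zero]
  ring

lemma mem_closedBall_ofReal_iff {u : ℂ} {c ρ : ℝ} (hρ : 0 ≤ ρ) :
    u ∈ closedBall (c : ℂ) ρ ↔ ‖u‖ ^ 2 + c ^ 2 - ρ ^ 2 ≤ 2 * c * u.re := by
  rw [mem_closedBall, dist_eq, ← pow_le_pow_iff_left₀ (norm_nonneg _) hρ two_ne_zero,
    sq_norm_sub_ofReal]
  constructor <;> intro h <;> linarith

lemma sq_two_mul_re_of_sq_eq_mul {s v w : ℂ} (h : s ^ 2 = v * w) (c : ℝ) :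
    (2 * c * s.re) ^ 2 = 2 * c ^ 2 * (‖v‖ * ‖w‖ + (v * w).re) := by
  have hnorm : s.re ^ 2 + s.im ^ 2 = ‖v‖ * ‖w‖ := by
    rw [← norm_mul, ← h, norm_pow, Complex.sq_norm, normSq_apply]; ring
  have hre : s.re ^ 2 - s.im ^ 2 = (v * w).re := by
    rw [← h, pow_two s, mul_re]; ring
  linear_combination (2 * c ^ 2) * (hnorm + hre)

-- With `v = x e^{iα}`, `w = y e^{iβ}` this is AM-GM followed by
-- `(cos α + cos β)² ≤ 2 (1 + cos (α + β))`.
lemma mul_le_two_mul_sq_mul_norm_mul_norm_add_re (c : ℝ) (v w : ℂ) :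
    (2 * c * v.re + ‖v‖ * (‖w‖ - ‖v‖)) * (2 * c * w.re + ‖w‖ * (‖v‖ - ‖w‖))
      ≤ 2 * c ^ 2 * (‖v‖ * ‖w‖ + (v * w).re) := by
  set x := ‖v‖
  set y := ‖w‖
  have hx : x ^ 2 = v.re ^ 2 + v.im ^ 2 := by rw [Complex.sq_norm, normSq_apply]; ring
  have hy : y ^ 2 = w.re ^ 2 + w.im ^ 2 := by rw [Complex.sq_norm, normSq_apply]; ring
  have hxy : 0 ≤ x * y := by positivity
  have hsos : 2 * (x * y) * (2 * c ^ 2 * (x * y + (v * w).re)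
        - (2 * c * v.re + x * (y - x)) * (2 * c * w.re + y * (x - y)))
      = 2 * (x * y * (x - y) - c * (v.re * y - w.re * x)) ^ 2
        + 2 * c ^ 2 * (v.im * y - w.im * x) ^ 2 := by
    rw [mul_re]
    linear_combination (2 * c ^ 2 * y ^ 2) * hx + (2 * c ^ 2 * x ^ 2) * hy
  rcases hxy.eq_or_lt with h0 | hpos
  · rcases mul_eq_zero.1 h0.symm with hv | hw
    · simp [hv, norm_eq_zero.1 hv]
    · simp [hw, norm_eq_zero.1 hw]
  · nlinarith [sq_nonneg (x * y * (x - y) - c * (v.re * y - w.re * x)),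
      sq_nonneg (c * (v.im * y - w.im * x))]

lemma sq_mem_closedBall_ofReal {c ρ : ℝ} (hc : 0 ≤ c) {v w s : ℂ}
    (hv : v ∈ closedBall (c : ℂ) ρ) (hw : w ∈ closedBall (c : ℂ) ρ)
    (hs : s ^ 2 = v * w) (hs_re : 0 ≤ s.re) : s ∈ closedBall (c : ℂ) ρ := by
  have hρ : 0 ≤ ρ := nonneg_of_mem_closedBall hv
  rw [mem_closedBall_ofReal_iff hρ] at hv hw ⊢
  have hs_norm : ‖s‖ ^ 2 = ‖v‖ * ‖w‖ := by rw [← norm_pow, hs, norm_mul]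
  rw [hs_norm]
  set L := ‖v‖ * ‖w‖ + c ^ 2 - ρ ^ 2
  have hLv : L ≤ 2 * c * v.re + ‖v‖ * (‖w‖ - ‖v‖) := by linarith
  have hLw : L ≤ 2 * c * w.re + ‖w‖ * (‖v‖ - ‖w‖) := by linarith
  have hcs : 0 ≤ 2 * c * s.re := by positivity
  rcases le_or_gt L 0 with hL | hL
  · linarith
  · refine (pow_le_pow_iff_left₀ hL.le hcs two_ne_zero).1 ?_
    calc L ^ 2 ≤ (2 * c * v.re + ‖v‖ * (‖w‖ - ‖v‖)) * (2 * c * w.re + ‖w‖ * (‖v‖ - ‖w‖)) := by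
          rw [sq]; exact mul_le_mul hLv hLw hL.le (hL.le.trans hLv)
      _ ≤ 2 * c ^ 2 * (‖v‖ * ‖w‖ + (v * w).re) := mul_le_two_mul_sq_mul_norm_mul_norm_add_re c v w
      _ = (2 * c * s.re) ^ 2 := (sq_two_mul_re_of_sq_eq_mul hs c).symm

lemma exists_sq_eq_mul_of_mem_closedBall {c : ℂ} {ρ : ℝ} {v w : ℂ}
    (hv : v ∈ closedBall c ρ) (hw : w ∈ closedBall c ρ) :
    ∃ u ∈ closedBall c ρ, u ^ 2 = v * w := by
  set e := exp (arg c * I)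
  have he : ‖e‖ = 1 := norm_exp_ofReal_mul_I _
  have he0 : e ≠ 0 := exp_ne_zero _
  have hc : c = e * ‖c‖ := by rw [mul_comm, norm_mul_exp_arg_mul_I]
  have hrot : ∀ z r : ℂ, dist (e * z) (e * r) = dist z r := by
    intro z r; rw [dist_eq, dist_eq, ← mul_sub, norm_mul, he, one_mul]
  have hv' : e⁻¹ * v ∈ closedBall (‖c‖ : ℂ) ρ := by
    rw [mem_closedBall, ← hrot, ← mul_assoc, mul_inv_cancel₀ he0, one_mul, ← hc]; exact hv
  have hw' : e⁻¹ * w ∈ closedBall (‖c‖ : ℂ) ρ := by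
    rw [mem_closedBall, ← hrot, ← mul_assoc, mul_inv_cancel₀ he0, one_mul, ← hc]; exact hw
  set s := (e⁻¹ * v * (e⁻¹ * w)) ^ (2⁻¹ : ℂ)
  have hs : s ^ 2 = e⁻¹ * v * (e⁻¹ * w) := cpow_ofNat_inv_pow _ 2
  have hs_re : 0 ≤ s.re := by rw [cpow_inv_two_re]; exact Real.sqrt_nonneg _
  refine ⟨e * s, ?_, ?_⟩
  · rw [mem_closedBall, hc, hrot]
    exact sq_mem_closedBall_ofReal (norm_nonneg c) hv' hw' hs hs_re
  · rw [mul_pow, hs]; field_simp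

theorem closedBall_mul_self_eq_squares_general (c : ℂ) (ρ : ℝ) :
    prodSet (Metric.closedBall c ρ)
      = {z | ∃ v ∈ Metric.closedBall c ρ, z = v ^ 2} := by
  ext z
  constructor
  · rintro ⟨v, hv, w, hw, rfl⟩
    obtain ⟨u, hu, hu2⟩ := exists_sq_eq_mul_of_mem_closedBall hv hw
    exact ⟨u, hu, hu2.symm⟩
  · rintro ⟨v, hv, rfl⟩
    exact ⟨v, hv, v, hv, sq v⟩

/-- **Theorem.** For a closed disk `V ⊆ ℂ`, the product set `V·V` coincides with the
set of squares `{v² : v ∈ V}` (a consequence of the Grace–Walsh–Szegő theorem). -/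
theorem closedBall_mul_self_eq_squares (c : ℂ) (ρ : ℝ) (hρ : 0 ≤ ρ) :
    prodSet (Metric.closedBall c ρ)
      = {z | ∃ v ∈ Metric.closedBall c ρ, z = v ^ 2} :=
  closedBall_mul_self_eq_squares_general c ρ

end
end

section
/- For every real q ∈ (0,1) there exists a closed disk V ⊆ ℂ such that V is contained in the open disk {z : |z| < √(1−q)} (so in particular 1 ∉ V and f_q is defined on V), 0 ∈ V, f_q(V) = V, and the product set V·V is contained in the interior of V. -/
/-!
The disk `V` is taken with real centre `c` and radius `ρ` such that `(1 - c)² - ρ² = q`. For such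
a disk the identity
`|(1 - c)(y - 1) + q|² - ρ² |y - 1|² = q (|y - c|² - ρ²)`
shows that `f_q(y) - c = ((1 - c)(y - 1) + q) / (y - 1)` lies in `V` whenever `y` does, and since
`f_q` is an involution, `f_q(V) = V`. Requiring moreover `ρ - c = 1 - q` pins the disk down:
`c = q(1-q)/(2(2-q))`, `ρ = (1-q)(4-q)/(2(2-q))`, with
`c + ρ = 2(1-q)/(2-q)`; then `(c + ρ)² < 1 - q`, which gives both `V ⊆ {|z| < √(1-q)}` and
`|vw - c| ≤ (c + ρ)² + c < ρ` for `v, w ∈ V`.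
-/

noncomputable section

open Complex Metric Set

theorem fq_fq {q y : ℂ} (hq : q ≠ 0) (hy : y ≠ 1) : fq q (fq q y) = y := by
  have hy' : y - 1 ≠ 0 := sub_ne_zero.mpr hy
  simp only [fq, add_sub_cancel_left]
  field_simp
  ring

theorem normSq_fq_numerator_sub {c ρ q : ℝ} (h : (1 - c) ^ 2 - ρ ^ 2 = q) (y : ℂ) :
    normSq ((1 - c) * (y - 1) + q) - ρ ^ 2 * normSq (y - 1) = q * (normSq (y - c) - ρ ^ 2) := by
  subst h
  simp only [normSq_apply, add_re, add_im, mul_re, mul_im, sub_re, sub_im, one_re, one_im,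
    ofReal_re, ofReal_im]
  ring

section RealCentre

variable {c ρ q : ℝ}

theorem one_notMem_closedBall_of_sq_lt (h : ρ ^ 2 < (1 - c) ^ 2) :
    (1 : ℂ) ∉ closedBall (c : ℂ) ρ := by
  rw [mem_closedBall, dist_eq, ← ofReal_one, ← ofReal_sub, norm_real, Real.norm_eq_abs, not_le]
  exact lt_of_pow_lt_pow_left₀ 2 (abs_nonneg _) (by rwa [sq_abs])

theorem mapsTo_fq_closedBall (hq : (1 - c) ^ 2 - ρ ^ 2 = q) (hq0 : 0 < q) (hρ : 0 ≤ ρ) :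
    MapsTo (fq q) (closedBall (c : ℂ) ρ) (closedBall (c : ℂ) ρ) := by
  intro y hy
  have hy1 : y - 1 ≠ 0 := sub_ne_zero.mpr fun h =>
    one_notMem_closedBall_of_sq_lt (by linarith) (h ▸ hy)
  have hfq : fq q y - c = ((1 - c) * (y - 1) + q) / (y - 1) := by
    simp only [fq]
    field_simp
    ring
  have hnormSq : normSq ((1 - c) * (y - 1) + q) ≤ ρ ^ 2 * normSq (y - 1) := by
    have hyc : normSq (y - c) ≤ ρ ^ 2 := by
      rw [← Complex.sq_norm]
      exact pow_le_pow_left₀ (norm_nonneg _) (mem_closedBall_iff_norm.mp hy) 2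
    nlinarith [normSq_fq_numerator_sub hq y]
  rw [mem_closedBall_iff_norm, hfq, norm_div, div_le_iff₀ (norm_pos_iff.mpr hy1)]
  refine le_of_pow_le_pow_left₀ two_ne_zero (by positivity) ?_
  rwa [mul_pow, Complex.sq_norm, Complex.sq_norm]

theorem fq_image_closedBall (hq : (1 - c) ^ 2 - ρ ^ 2 = q) (hq0 : 0 < q) (hρ : 0 ≤ ρ) :
    fq q '' closedBall (c : ℂ) ρ = closedBall (c : ℂ) ρ := by
  have hinv : InvOn (fq q) (fq q) (closedBall (c : ℂ) ρ) (closedBall (c : ℂ) ρ) := by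
    have h : LeftInvOn (fq q) (fq q) (closedBall (c : ℂ) ρ) := fun y hy =>
      fq_fq (ofReal_ne_zero.mpr hq0.ne') (ne_of_mem_of_not_mem hy
        (one_notMem_closedBall_of_sq_lt (by linarith)))
    exact ⟨h, h⟩
  have hmaps := mapsTo_fq_closedBall hq hq0 hρ
  exact (hinv.bijOn hmaps hmaps).image_eq

end RealCentre

theorem prodSet_closedBall_subset_interior {c : ℂ} {ρ : ℝ} (h : (‖c‖ + ρ) ^ 2 + ‖c‖ < ρ) :
    prodSet (closedBall c ρ) ⊆ interior (closedBall c ρ) := by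
  have hρ : 0 < ρ := by nlinarith [norm_nonneg c]
  have hnorm : ∀ v ∈ closedBall c ρ, ‖v‖ ≤ ‖c‖ + ρ := fun v hv => by
    linarith [norm_le_norm_add_norm_sub' v c, mem_closedBall_iff_norm.mp hv]
  rintro _ ⟨v, hv, w, hw, rfl⟩
  rw [interior_closedBall c hρ.ne', mem_ball_iff_norm]
  calc ‖v * w - c‖ ≤ ‖v‖ * ‖w‖ + ‖c‖ := (norm_sub_le _ _).trans_eq (by rw [norm_mul])
    _ ≤ (‖c‖ + ρ) ^ 2 + ‖c‖ := by
      gcongr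
      rw [sq]
      exact mul_le_mul (hnorm v hv) (hnorm w hw) (norm_nonneg _) (by positivity)
    _ < ρ := h

theorem exists_invariant_disk_parameters {q : ℝ} (hq0 : 0 < q) (hq1 : q < 1) :
    ∃ c ρ : ℝ, 0 ≤ c ∧ (1 - c) ^ 2 - ρ ^ 2 = q ∧ ρ - c = 1 - q ∧ (c + ρ) ^ 2 < 1 - q := by
  have h2q : 0 < 2 - q := by linarith
  have h1q : 0 < 1 - q := by linarith
  refine ⟨q * (1 - q) / (2 * (2 - q)), (1 - q) * (4 - q) / (2 * (2 - q)), by positivity,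
    by field_simp; ring, by field_simp; ring, ?_⟩
  have hsum : q * (1 - q) / (2 * (2 - q)) + (1 - q) * (4 - q) / (2 * (2 - q))
      = 2 * (1 - q) / (2 - q) := by
    field_simp
    ring
  rw [hsum, div_pow, div_lt_iff₀ (by positivity)]
  nlinarith [mul_pos (mul_pos hq0 hq0) h1q]

/-- **Theorem.** For every real `q ∈ (0,1)` there is a closed disk `V` contained in
the open disk of radius `√(1-q)` about `0`, with `0 ∈ V`, `f_q(V) = V`, and
`V·V` contained in the interior of `V`. -/
theorem invariant_disk_for_q_in_unit_interval (q : ℝ) (hq0 : 0 < q) (hq1 : q < 1) :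
    ∃ (c : ℂ) (ρ : ℝ), 0 ≤ ρ ∧
      Metric.closedBall c ρ ⊆ Metric.ball (0 : ℂ) (Real.sqrt (1 - q)) ∧
      (0 : ℂ) ∈ Metric.closedBall c ρ ∧
      fq (q : ℂ) '' Metric.closedBall c ρ = Metric.closedBall c ρ ∧
      prodSet (Metric.closedBall c ρ) ⊆ interior (Metric.closedBall c ρ) := by
  obtain ⟨c, ρ, hc, hq, hρc, hcρ⟩ := exists_invariant_disk_parameters hq0 hq1
  have hρ : 0 ≤ ρ := by linarith
  have hnorm_c : ‖(c : ℂ)‖ = c := Complex.norm_of_nonneg hc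
  refine ⟨c, ρ, hρ, closedBall_subset_ball' ?_, ?_, fq_image_closedBall hq hq0 hρ,
    prodSet_closedBall_subset_interior ?_⟩
  · rw [dist_zero_right, hnorm_c]
    exact Real.lt_sqrt_of_sq_lt (by linarith)
  · rw [mem_closedBall, dist_zero_left, hnorm_c]
    linarith
  · rw [hnorm_c]
    linarith

end
end

section
/- Let q be a real number with q > 32/27, and define the sequence a : ℕ → ℝ by a₀ = 0 and a_{k+1} = 1 + q/(a_k² − 1). Then there exists k ∈ ℕ such that a_k ≤ −1. -/
/-- **Theorem.** For real `q > 32/27`, the sequence `a₀ = 0`,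
`a_{k+1} = 1 + q/(a_k² - 1)` eventually satisfies `a_k ≤ -1`. -/
theorem iterates_escape (q : ℝ) (hq : 32 / 27 < q) (a : ℕ → ℝ) (h0 : a 0 = 0)
    (hrec : ∀ k : ℕ, a (k + 1) = 1 + q / ((a k) ^ 2 - 1)) :
    ∃ k : ℕ, a k ≤ -1 := by
  by_contra hcon
  push_neg at hcon
  obtain ⟨ε, hεdef⟩ : ∃ ε : ℝ, ε = q - 32 / 27 := ⟨_, rfl⟩
  have hε : 0 < ε := by rw [hεdef]; linarith
  have key : ∀ k : ℕ, a k ≤ -((k : ℝ) * ε) := by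
    intro k
    induction k with
    | zero => simp [h0]
    | succ n ih =>
      have hz1 : -1 < a n := hcon n
      have hz0 : a n ≤ 0 := le_trans ih (neg_nonpos.mpr (mul_nonneg (Nat.cast_nonneg n) hε.le))
      have hden : (a n) ^ 2 - 1 < 0 := by nlinarith
      have hden1 : -1 ≤ (a n) ^ 2 - 1 := by nlinarith
      have hstep : a (n + 1) ≤ a n - ε := by
        rw [hrec n]
        have hdiv : q / ((a n) ^ 2 - 1) ≤ a n - 1 - ε := by
          rw [div_le_iff_of_neg hden]
          nlinarith [mul_nonneg (sq_nonneg (a n + 1/3)) (by linarith : (0:ℝ) ≤ 5/3 - a n),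
            mul_nonneg hε.le (sq_nonneg (a n))]
        linarith
      have : a (n + 1) ≤ -((n : ℝ) * ε) - ε := by linarith
      calc a (n + 1) ≤ -((n : ℝ) * ε) - ε := this
        _ = -((↑(n + 1) : ℝ) * ε) := by push_cast; ring
  obtain ⟨N, hN⟩ := exists_nat_gt (1 / ε)
  have h1 : (1 : ℝ) < (N : ℝ) * ε := by
    rw [div_lt_iff₀ hε] at hN; linarith
  have := key N
  have := hcon N
  linarith
end
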